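/- arXiv:1510.03292 — 6 statements merged into one kernel-verified Lean document; each statement's English description precedes it below -/
import Mathlib

section
/- Let A be a unital complex *-algebra, ε: A → ℂ a unital *-homomorphism, D a complex inner product space, π: A → End(D) a unital *-representation, and η: A → D a linear map satisfying the cocycle identity η(ab) = π(a)η(b) + ε(b)η(a) for all a,b ∈ A. Then the bilinear map L(η): A × A → ℂ defined by L(η)(a,b) = ⟨η(a*), η(b)⟩ is a Hochschild 2-cocycle for the bimodule ℂ with both actions given by ε; that is, ε(a)L(η)(b,c) − L(η)(ab,c) + L(η)(a,bc) − L(η)(a,b)ε(c) = 0 for all a,b,c ∈ A. -/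
/-!
Expand `η(star (a * b)) = η(star b * star a)` and `η(b * c)` by the cocycle identity: the two
terms involving `π b` coincide because `π` is a `*`-representation, and the remaining terms are
`ε a * L(b, c)` and `L(a, b) * ε c`.
-/

open scoped InnerProductSpace

section CocycleInner

variable {𝕜 A D : Type*} [RCLike 𝕜] [Ring A] [Algebra 𝕜 A] [StarRing A]
  [NormedAddCommGroup D] [InnerProductSpace 𝕜 D]
  {ε : A →⋆ₐ[𝕜] 𝕜} {π : A →ₐ[𝕜] (D →ₗ[𝕜] D)} {η : A →ₗ[𝕜] D}

theorem inner_cocycle_star_mul_left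
    (hπ : ∀ (a : A) (u v : D), ⟪π (star a) u, v⟫_𝕜 = ⟪u, π a v⟫_𝕜)
    (hη : ∀ a b : A, η (a * b) = π a (η b) + ε b • η a) (a b : A) (v : D) :
    ⟪η (star (a * b)), v⟫_𝕜 = ε a * ⟪η (star b), v⟫_𝕜 + ⟪η (star a), π b v⟫_𝕜 := by
  rw [star_mul, hη, inner_add_left, inner_smul_left, hπ, map_star ε, starRingEnd_apply,
    star_star, add_comm]

theorem inner_cocycle_mul_right
    (hη : ∀ a b : A, η (a * b) = π a (η b) + ε b • η a) (u : D) (b c : A) :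
    ⟪u, η (b * c)⟫_𝕜 = ⟪u, π b (η c)⟫_𝕜 + ⟪u, η b⟫_𝕜 * ε c := by
  rw [hη, inner_add_right, inner_smul_right, mul_comm]

end CocycleInner

theorem levyKhinchin_stmt0_general
    {A : Type*} [Ring A] [Algebra ℂ A] [StarRing A]
    {D : Type*} [NormedAddCommGroup D] [InnerProductSpace ℂ D]
    (ε : A →⋆ₐ[ℂ] ℂ) (π : A →ₐ[ℂ] (D →ₗ[ℂ] D))
    (hπ : ∀ (a : A) (u v : D), ⟪π (star a) u, v⟫_ℂ = ⟪u, π a v⟫_ℂ)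
    (η : A →ₗ[ℂ] D)
    (hη : ∀ a b : A, η (a * b) = π a (η b) + ε b • η a) :
    ∀ a b c : A,
      ε a * ⟪η (star b), η c⟫_ℂ - ⟪η (star (a * b)), η c⟫_ℂ
        + ⟪η (star a), η (b * c)⟫_ℂ - ⟪η (star a), η b⟫_ℂ * ε c = 0 := by
  intro a b c
  rw [inner_cocycle_star_mul_left hπ hη, inner_cocycle_mul_right hη]
  ring

/-- For a unital complex `*`-algebra `A`, a character `ε : A → ℂ`,
a unital `*`-representation `π` of `A` on a complex inner product space `D`, and a
`π`-`ε`-cocycle `η`, the bilinear map `L(η)(a,b) = ⟪η(a*), η(b)⟫` is a Hochschild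
2-cocycle for the `ε`-`ε`-bimodule `ℂ`. -/
theorem levyKhinchin_stmt0
    {A : Type*} [Ring A] [Algebra ℂ A] [StarRing A] [StarModule ℂ A]
    {D : Type*} [NormedAddCommGroup D] [InnerProductSpace ℂ D]
    (ε : A →⋆ₐ[ℂ] ℂ) (π : A →ₐ[ℂ] (D →ₗ[ℂ] D))
    (hπ : ∀ (a : A) (u v : D), ⟪π (star a) u, v⟫_ℂ = ⟪u, π a v⟫_ℂ)
    (η : A →ₗ[ℂ] D)
    (hη : ∀ a b : A, η (a * b) = π a (η b) + ε b • η a) :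
    ∀ a b c : A,
      ε a * ⟪η (star b), η c⟫_ℂ - ⟪η (star (a * b)), η c⟫_ℂ
        + ⟪η (star a), η (b * c)⟫_ℂ - ⟪η (star a), η b⟫_ℂ * ε c = 0 :=
  levyKhinchin_stmt0_general ε π hπ η hη
end

section
/- Let G = ⟨a, b, r | aba⁻¹b⁻¹ = r² = (ra)² = (rb)² = 1⟩ be the wallpaper group p2, D a complex pre-Hilbert space, and define π on the generators by π(a) = π(b) = id_D, π(r) = −id_D. Then π extends to a unital *-representation of ℂ[G] on D, and for any x, y, z ∈ D there exists a (unique) π-ε-cocycle η: ℂ[G] → D with η(a) = x, η(b) = y, η(r) = z. -/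
/-!
A `π`-cocycle `η` is the same thing as an affine action `g • v = π g v + η g` with linear part
`π`, i.e. a homomorphism into the affine group whose linear part is `π`; its cocycle is
`g ↦ g • 0`. For p2 with `π` the sign character `a, b ↦ 1`, `r ↦ -1`, let `a` and `b` act by the
translations by `x` and `y` and `r` by the point reflection `v ↦ z - v`. Translations commute and
the composite of a point reflection with a translation is again a point reflection, hence an
involution, so the defining relations hold and the action exists. A cocycle is determined by its
values on generators, and `π` acts by the scalars `±1`, which are self-adjoint.
-/
open scoped InnerProductSpace

section Cocycle

variable {G k V : Type*} [Group G] [Ring k] [AddCommGroup V] [Module k V]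

def IsCocycle (ρ : G →* V →ₗ[k] V) (η : G → V) : Prop :=
  ∀ g h, η (g * h) = ρ g (η h) + η g

namespace IsCocycle

variable {ρ : G →* V →ₗ[k] V} {η η' : G → V}

theorem map_one (hη : IsCocycle ρ η) : η 1 = 0 := by
  simpa using hη 1 1

theorem map_inv (hη : IsCocycle ρ η) (g : G) : η g⁻¹ = -ρ g⁻¹ (η g) := by
  rw [eq_neg_iff_add_eq_zero, add_comm, ← hη, inv_mul_cancel, hη.map_one]

theorem eqOn_closure (hη : IsCocycle ρ η) (hη' : IsCocycle ρ η') {s : Set G}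
    (h : s.EqOn η η') : (Subgroup.closure s : Set G).EqOn η η' := by
  intro g hg
  induction hg using Subgroup.closure_induction with
  | mem g hg => exact h hg
  | one => rw [hη.map_one, hη'.map_one]
  | mul g g' _ _ hg hg' => rw [hη, hη', hg, hg']
  | inv g _ hg => rw [hη.map_inv, hη'.map_inv, hg]

theorem eq_of_eqOn_dense (hη : IsCocycle ρ η) (hη' : IsCocycle ρ η') {s : Set G}
    (hs : Subgroup.closure s = ⊤) (h : s.EqOn η η') : η = η' :=
  funext fun g ↦ hη.eqOn_closure hη' h (hs ▸ Subgroup.mem_top g)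

end IsCocycle

theorem isCocycle_apply_zero {ρ : G →* V →ₗ[k] V} (Φ : G →* V ≃ᵃ[k] V)
    (hΦ : ∀ g, ((Φ g).linear : V →ₗ[k] V) = ρ g) : IsCocycle ρ (fun g ↦ Φ g 0) := by
  intro g h
  dsimp only
  rw [map_mul, AffineEquiv.coe_mul, Function.comp_apply, ← hΦ]
  simpa using (Φ g).map_vadd 0 (Φ h 0)

theorem PresentedGroup.existsUnique_isCocycle {α : Type*} {rels : Set (FreeGroup α)}
    (ρ : PresentedGroup rels →* V →ₗ[k] V) (F : α → V ≃ᵃ[k] V)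
    (hF : ∀ i, ((F i).linear : V →ₗ[k] V) = ρ (.of i))
    (hrels : ∀ w ∈ rels, FreeGroup.lift F w = 1) :
    ∃! η : PresentedGroup rels → V, IsCocycle ρ η ∧ ∀ i, η (.of i) = F i 0 := by
  set Φ := PresentedGroup.toGroup hrels
  have hΦ : LinearEquiv.automorphismGroup.toLinearMapMonoidHom.comp
      (AffineEquiv.linearHom.comp Φ) = ρ :=
    MonoidHom.eq_of_eqOn_dense (PresentedGroup.closure_range_of rels) <| by
      rintro _ ⟨i, rfl⟩
      simp [Φ, ← hF]
  have hcoc : IsCocycle ρ (fun g ↦ Φ g 0) :=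
    isCocycle_apply_zero Φ fun g ↦ by rw [← hΦ]; rfl
  refine ⟨fun g ↦ Φ g 0, ⟨hcoc, fun i ↦ by simp [Φ]⟩, ?_⟩
  rintro η ⟨hη, hηF⟩
  refine hη.eq_of_eqOn_dense hcoc (PresentedGroup.closure_range_of rels) ?_
  rintro _ ⟨i, rfl⟩
  simp [Φ, hηF]

end Cocycle

section WallpaperP2

def p2Rels : Set (FreeGroup (Fin 3)) :=
  {.of 0 * .of 1 * (.of 0)⁻¹ * (.of 1)⁻¹, .of 2 ^ 2, (.of 2 * .of 0) ^ 2, (.of 2 * .of 1) ^ 2}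

theorem p2Rels_lift_eq_one {H : Type*} [Group H] {f : Fin 3 → H} (hab : Commute (f 0) (f 1))
    (hr : f 2 ^ 2 = 1) (hra : (f 2 * f 0) ^ 2 = 1) (hrb : (f 2 * f 1) ^ 2 = 1) :
    ∀ w ∈ p2Rels, FreeGroup.lift f w = 1 := by
  rintro w (rfl | rfl | rfl | rfl) <;> simp [hab.eq, hr, hra, hrb]

variable {k V : Type*} [Ring k] [AddCommGroup V] [Module k V]

variable (k) in
def signAffine (s : ℤˣ) (t : V) : V ≃ᵃ[k] V :=
  AffineEquiv.ofLinearEquiv (DistribMulAction.toLinearEquiv k V s) 0 t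

@[simp] theorem signAffine_apply (s : ℤˣ) (t v : V) : signAffine k s t v = s • v + t := by
  simp [signAffine]

@[simp] theorem signAffine_linear (s : ℤˣ) (t : V) :
    (signAffine k s t).linear = DistribMulAction.toLinearEquiv k V s :=
  rfl

theorem signAffine_p2Rels_lift_eq_one (x y z : V) :
    ∀ w ∈ p2Rels, FreeGroup.lift (fun i ↦ signAffine k (![1, 1, -1] i) (![x, y, z] i)) w = 1 := by
  refine p2Rels_lift_eq_one ?_ ?_ ?_ ?_ <;> ext v <;> simp [pow_two] <;> abel

end WallpaperP2

theorem inner_units_int_smul_comm {𝕜 E : Type*} [RCLike 𝕜] [SeminormedAddCommGroup E]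
    [InnerProductSpace 𝕜 E] (u : ℤˣ) (x y : E) : ⟪u • x, y⟫_𝕜 = ⟪x, u • y⟫_𝕜 := by
  rcases Int.units_eq_one_or u with rfl | rfl <;> simp [inner_neg_left, inner_neg_right]

/-- Let `G = ⟨a,b,r | aba⁻¹b⁻¹ = r² = (ra)² = (rb)² = 1⟩` be
the wallpaper group p2 and `D` a complex pre-Hilbert space. The prescription
`π(a) = π(b) = id`, `π(r) = -id` extends to a unital `*`-representation of
`ℂ[G]` on `D`, and for any `x, y, z ∈ D` there is a unique `π`-`ε`-cocycle `η`
with `η(a) = x`, `η(b) = y`, `η(r) = z`. -/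
theorem levyKhinchin_stmt11
    {D : Type*} [NormedAddCommGroup D] [InnerProductSpace ℂ D]
    (rels : Set (FreeGroup (Fin 3)))
    (hrels : rels = {FreeGroup.of 0 * FreeGroup.of 1 * (FreeGroup.of 0)⁻¹ * (FreeGroup.of 1)⁻¹,
      FreeGroup.of 2 ^ 2,
      (FreeGroup.of 2 * FreeGroup.of 0) ^ 2,
      (FreeGroup.of 2 * FreeGroup.of 1) ^ 2})
    (a b r : PresentedGroup rels)
    (ha : a = PresentedGroup.of 0) (hb : b = PresentedGroup.of 1)
    (hr : r = PresentedGroup.of 2) :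
    ∃ π : PresentedGroup rels →* (D →ₗ[ℂ] D),
      π a = LinearMap.id ∧ π b = LinearMap.id ∧ π r = -LinearMap.id ∧
      (∀ (g : PresentedGroup rels) (u v : D), ⟪π g⁻¹ u, v⟫_ℂ = ⟪u, π g v⟫_ℂ) ∧
      ∀ x y z : D, ∃! η : PresentedGroup rels → D,
        (∀ g h, η (g * h) = π g (η h) + η g) ∧
        η a = x ∧ η b = y ∧ η r = z := by
  obtain rfl : rels = p2Rels := hrels
  subst ha hb hr
  let s : Fin 3 → ℤˣ := ![1, 1, -1]
  let σ : PresentedGroup p2Rels →* ℤˣ :=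
    PresentedGroup.toGroup (f := s) (p2Rels_lift_eq_one (by simp [s]) rfl rfl rfl)
  let π := (DistribMulAction.toModuleEnd ℂ D).comp σ
  refine ⟨π, ?_, ?_, ?_, fun g u v ↦ ?_, fun x y z ↦ ?_⟩
  · ext v; simp [π, σ, s]
  · ext v; simp [π, σ, s]
  · ext v; simp [π, σ, s]
  · simp [π, Int.units_inv_eq_self, inner_units_int_smul_comm]
  · have hlin (i : Fin 3) :
        ((signAffine ℂ (s i) (![x, y, z] i)).linear : D →ₗ[ℂ] D) = π (.of i) := by
      ext v; simp [π, σ]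
    simpa [IsCocycle, Fin.forall_fin_succ] using
      PresentedGroup.existsUnique_isCocycle π _ hlin (signAffine_p2Rels_lift_eq_one x y z)
end

section
/- Let G be the wallpaper group p2, π the *-representation of ℂ[G] on a pre-Hilbert space D with π(a) = π(b) = id, π(r) = −id, and η the π-ε-cocycle with η(a) = x, η(b) = y, η(r) = z. If there exists a generating functional ψ completing (π, η) to a Schürmann triple, then ⟨x, y⟩ ∈ ℝ. In particular, for D = ℂ, x = 1, y = i, z = 0, the cocycle η admits no generating functional, so (ℂ[G], ε) fails property (NC) and (AC). -/
/-!
Since `a` and `b` commute, the coboundary identity for `ψ` at `(a, b)` and at `(b, a)` gives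
`⟪η a⁻¹, η b⟫ = ⟪η b⁻¹, η a⟫`. As `π` is trivial on `a` and `b`, the cocycle identity gives
`η a⁻¹ = -x` and `η b⁻¹ = -y`, hence `⟪x, y⟫ = ⟪y, x⟫ = conj ⟪x, y⟫`. For `x = 1`, `y = i` this fails.
-/

open scoped InnerProductSpace commutatorElement

theorem PresentedGroup.commute_of_commutatorElement_mem {α : Type*} {rels : Set (FreeGroup α)}
    {i j : α} (h : ⁅FreeGroup.of i, FreeGroup.of j⁆ ∈ rels) :
    Commute (PresentedGroup.of i : PresentedGroup rels) (PresentedGroup.of j) := by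
  rw [← commutatorElement_eq_one_iff_commute, PresentedGroup.of, PresentedGroup.of,
    ← map_commutatorElement, PresentedGroup.one_of_mem h]

section Cocycle

variable {G R M : Type*} [Group G] [Semiring R] [AddCommGroup M] [Module R M]
  {π : G →* (M →ₗ[R] M)} {η : G → M}

theorem cocycle_map_one (hη : ∀ g h, η (g * h) = π g (η h) + η g) : η 1 = 0 := by
  simpa using hη 1 1

theorem cocycle_map_inv_of_eq_id (hη : ∀ g h, η (g * h) = π g (η h) + η g) {g : G}
    (hg : π g = LinearMap.id) : η g⁻¹ = -η g := by
  have h := hη g g⁻¹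
  rw [mul_inv_cancel, cocycle_map_one hη, hg, LinearMap.id_apply] at h
  exact eq_neg_of_add_eq_zero_left h.symm

end Cocycle

section Coboundary

variable {G D : Type*} [Group G] [NormedAddCommGroup D] [InnerProductSpace ℂ D]
  {η : G → D} {ψ : G → ℂ}

theorem inner_inv_eq_of_coboundary_of_commute
    (hψ : ∀ g h, ψ (g * h) = ψ g + ψ h + ⟪η g⁻¹, η h⟫_ℂ) {a b : G} (hab : Commute a b) :
    ⟪η a⁻¹, η b⟫_ℂ = ⟪η b⁻¹, η a⟫_ℂ := by
  have h := hψ a b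
  rw [hab.eq, hψ b a, add_comm (ψ b)] at h
  exact (add_left_cancel h).symm

theorem im_inner_eq_zero_of_coboundary_of_commute {π : G →* (D →ₗ[ℂ] D)}
    (hη : ∀ g h, η (g * h) = π g (η h) + η g)
    (hψ : ∀ g h, ψ (g * h) = ψ g + ψ h + ⟪η g⁻¹, η h⟫_ℂ) {a b : G} (hab : Commute a b)
    (ha : π a = LinearMap.id) (hb : π b = LinearMap.id) :
    (⟪η a, η b⟫_ℂ).im = 0 := by
  have h := inner_inv_eq_of_coboundary_of_commute hψ hab
  rw [cocycle_map_inv_of_eq_id hη ha, cocycle_map_inv_of_eq_id hη hb, inner_neg_left,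
    inner_neg_left, neg_inj] at h
  rw [← Complex.conj_eq_iff_im, inner_conj_symm, h]

end Coboundary

theorem levyKhinchin_stmt12_general
    (rels : Set (FreeGroup (Fin 3)))
    (hrels : rels = {FreeGroup.of 0 * FreeGroup.of 1 * (FreeGroup.of 0)⁻¹ * (FreeGroup.of 1)⁻¹,
      FreeGroup.of 2 ^ 2,
      (FreeGroup.of 2 * FreeGroup.of 0) ^ 2,
      (FreeGroup.of 2 * FreeGroup.of 1) ^ 2})
    (a b r : PresentedGroup rels)
    (ha : a = PresentedGroup.of 0) (hb : b = PresentedGroup.of 1) :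
    (∀ {D : Type} [NormedAddCommGroup D] [InnerProductSpace ℂ D]
      (π : PresentedGroup rels →* (D →ₗ[ℂ] D)),
      π a = LinearMap.id → π b = LinearMap.id → π r = -LinearMap.id →
      ∀ (x y z : D) (η : PresentedGroup rels → D),
        (∀ g h, η (g * h) = π g (η h) + η g) →
        η a = x → η b = y → η r = z →
        (∃ ψ : PresentedGroup rels → ℂ,
          (∀ g, ψ g⁻¹ = starRingEnd ℂ (ψ g)) ∧
          (∀ g h, ψ (g * h) = ψ g + ψ h + ⟪η g⁻¹, η h⟫_ℂ)) →
        (⟪x, y⟫_ℂ).im = 0) ∧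
    ∀ (π : PresentedGroup rels →* (ℂ →ₗ[ℂ] ℂ)),
      π a = LinearMap.id → π b = LinearMap.id → π r = -LinearMap.id →
      ∀ η : PresentedGroup rels → ℂ,
        (∀ g h, η (g * h) = π g (η h) + η g) →
        η a = 1 → η b = Complex.I → η r = 0 →
        ¬ ∃ ψ : PresentedGroup rels → ℂ,
          (∀ g, ψ g⁻¹ = starRingEnd ℂ (ψ g)) ∧
          (∀ g h, ψ (g * h) = ψ g + ψ h + ⟪η g⁻¹, η h⟫_ℂ) := by
  have hab : Commute a b := by
    subst hrels ha hb
    exact PresentedGroup.commute_of_commutatorElement_mem (Set.mem_insert _ _)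
  refine ⟨?_, ?_⟩
  · rintro D _ _ π hπa hπb - x y z η hη rfl rfl - ⟨ψ, -, hψ⟩
    exact im_inner_eq_zero_of_coboundary_of_commute hη hψ hab hπa hπb
  · rintro π hπa hπb - η hη hx hy - ⟨ψ, -, hψ⟩
    have h := im_inner_eq_zero_of_coboundary_of_commute hη hψ hab hπa hπb
    simp [hx, hy, RCLike.inner_apply] at h

/-- Let `G` be the wallpaper group p2, `π` the representation
with `π(a) = π(b) = id`, `π(r) = -id`, and `η` the `π`-`ε`-cocycle with
`η(a) = x`, `η(b) = y`, `η(r) = z`. If `(π, η)` can be completed to a Schürmann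
triple by a generating functional `ψ`, then `⟪x, y⟫ ∈ ℝ`. In particular, for
`D = ℂ`, `x = 1`, `y = i`, `z = 0`, no generating functional exists; hence
`(ℂ[G], ε)` does not have properties (NC) or (AC). -/
theorem levyKhinchin_stmt12
    (rels : Set (FreeGroup (Fin 3)))
    (hrels : rels = {FreeGroup.of 0 * FreeGroup.of 1 * (FreeGroup.of 0)⁻¹ * (FreeGroup.of 1)⁻¹,
      FreeGroup.of 2 ^ 2,
      (FreeGroup.of 2 * FreeGroup.of 0) ^ 2,
      (FreeGroup.of 2 * FreeGroup.of 1) ^ 2})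
    (a b r : PresentedGroup rels)
    (ha : a = PresentedGroup.of 0) (hb : b = PresentedGroup.of 1)
    (hr : r = PresentedGroup.of 2) :
    (∀ {D : Type} [NormedAddCommGroup D] [InnerProductSpace ℂ D]
      (π : PresentedGroup rels →* (D →ₗ[ℂ] D)),
      π a = LinearMap.id → π b = LinearMap.id → π r = -LinearMap.id →
      ∀ (x y z : D) (η : PresentedGroup rels → D),
        (∀ g h, η (g * h) = π g (η h) + η g) →
        η a = x → η b = y → η r = z →
        (∃ ψ : PresentedGroup rels → ℂ,
          (∀ g, ψ g⁻¹ = starRingEnd ℂ (ψ g)) ∧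
          (∀ g h, ψ (g * h) = ψ g + ψ h + ⟪η g⁻¹, η h⟫_ℂ)) →
        (⟪x, y⟫_ℂ).im = 0) ∧
    ∀ (π : PresentedGroup rels →* (ℂ →ₗ[ℂ] ℂ)),
      π a = LinearMap.id → π b = LinearMap.id → π r = -LinearMap.id →
      ∀ η : PresentedGroup rels → ℂ,
        (∀ g h, η (g * h) = π g (η h) + η g) →
        η a = 1 → η b = Complex.I → η r = 0 →
        ¬ ∃ ψ : PresentedGroup rels → ℂ,
          (∀ g, ψ g⁻¹ = starRingEnd ℂ (ψ g)) ∧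
          (∀ g h, ψ (g * h) = ψ g + ψ h + ⟪η g⁻¹, η h⟫_ℂ) :=
  levyKhinchin_stmt12_general rels hrels a b r ha hb
end

section
/- Let A = ℂ[ℤ²] with generators a, b (commuting, invertible, unitary: a* = a⁻¹, b* = b⁻¹) and ε the trivial character. Let η: A → D be a Gaussian cocycle (ε-ε-derivation) into an inner product space D. If η admits a generating functional ψ (so that (ε·id, η, ψ) is a Schürmann triple), then ⟨η(a), η(b)⟩ ∈ ℝ. Conversely, if ⟨η(a), η(b)⟩ ∈ ℝ then such a generating functional exists. -/
/-!
On a commutative group the cocycle identity `ψ (g * h) = ψ (h * g)` forces the sesquilinear form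
`⟪η g, η h⟫` to be symmetric, hence real-valued; conversely, once it is real, `ψ g := -‖η g‖² / 2`
is a generating functional, because `‖η (g * h)‖² = ‖η g‖² + ‖η h‖² + 2 Re ⟪η g, η h⟫`. On `ℤ²` the imaginary part of the form
is an alternating `ℤ`-bilinear form, i.e. a multiple of the determinant, so it vanishes as soon
as it vanishes on the pair of generators.
-/

open scoped InnerProductSpace

lemma map_inv_of_map_mul_eq_add {G A : Type*} [Group G] [AddGroup A] {η : G → A}
    (hη : ∀ g h, η (g * h) = η g + η h) (g : G) : η g⁻¹ = -η g := by
  have hη_one : η 1 = 0 := by simpa using hη 1 1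
  refine eq_neg_of_add_eq_zero_left ?_
  rw [← hη, inv_mul_cancel, hη_one]

section GeneratingFunctional

variable {G D : Type*} [NormedAddCommGroup D] [InnerProductSpace ℂ D]

/-- The Schürmann-triple conditions on a functional, read off on group elements, where `ε = 1`
and `g⋆ = g⁻¹`. -/
def IsGeneratingFunctional [Group G] (η : G → D) (ψ : G → ℂ) : Prop :=
  (∀ g, ψ g⁻¹ = starRingEnd ℂ (ψ g)) ∧ ∀ g h, ψ (g * h) = ψ g + ψ h + ⟪η g⁻¹, η h⟫_ℂ

lemma IsGeneratingFunctional.im_inner_eq_zero [CommGroup G] {η : G → D} {ψ : G → ℂ}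
    (hη : ∀ g h, η (g * h) = η g + η h) (hψ : IsGeneratingFunctional η ψ) (g h : G) :
    (⟪η g, η h⟫_ℂ).im = 0 := by
  have h_symm : ⟪η g, η h⟫_ℂ = ⟪η h, η g⟫_ℂ := by
    have := (hψ.2 g h).symm.trans (mul_comm g h ▸ hψ.2 h g)
    rw [map_inv_of_map_mul_eq_add hη, map_inv_of_map_mul_eq_add hη,
      inner_neg_left, inner_neg_left] at this
    linear_combination -this
  rw [← Complex.conj_eq_iff_im, inner_conj_symm, h_symm]

lemma isGeneratingFunctional_neg_half_normSq [Group G] {η : G → D}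
    (hη : ∀ g h, η (g * h) = η g + η h) (h_real : ∀ g h, (⟪η g, η h⟫_ℂ).im = 0) :
    IsGeneratingFunctional η fun g ↦ ((-(‖η g‖ ^ 2 / 2) : ℝ) : ℂ) := by
  refine ⟨fun g ↦ ?_, fun g h ↦ ?_⟩ <;> dsimp only
  · rw [map_inv_of_map_mul_eq_add hη, norm_neg, Complex.conj_ofReal]
  · have h_inner : ⟪η g, η h⟫_ℂ = ((⟪η g, η h⟫_ℂ).re : ℂ) :=
      Complex.ext rfl (by simpa using h_real g h)
    rw [hη, map_inv_of_map_mul_eq_add hη, inner_neg_left, h_inner, norm_add_sq (𝕜 := ℂ),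
      RCLike.re_to_complex]
    push_cast
    ring

theorem exists_isGeneratingFunctional_iff [CommGroup G] {η : G → D}
    (hη : ∀ g h, η (g * h) = η g + η h) :
    (∃ ψ, IsGeneratingFunctional η ψ) ↔ ∀ g h, (⟪η g, η h⟫_ℂ).im = 0 :=
  ⟨fun ⟨_, hψ⟩ ↦ hψ.im_inner_eq_zero hη,
    fun h_real ↦ ⟨_, isGeneratingFunctional_neg_half_normSq hη h_real⟩⟩

end GeneratingFunctional

section IntProd

variable {D : Type*} [NormedAddCommGroup D] [InnerProductSpace ℂ D]
  {η : Multiplicative (ℤ × ℤ) → D}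

lemma map_ofAdd_eq_intCast_smul_add (hη : ∀ g h, η (g * h) = η g + η h) (p : ℤ × ℤ) :
    η (.ofAdd p) = (p.1 : ℂ) • η (.ofAdd (1, 0)) + (p.2 : ℂ) • η (.ofAdd (0, 1)) := by
  let f : ℤ × ℤ →+ D := AddMonoidHom.mk' (fun p ↦ η (.ofAdd p)) fun p q ↦ hη _ _
  have hp : p = p.1 • (1, 0) + p.2 • (0, 1) := by ext <;> simp
  calc η (.ofAdd p) = f (p.1 • (1, 0) + p.2 • (0, 1)) := by rw [← hp]; rfl
    _ = _ := by
      rw [map_add, map_zsmul, map_zsmul, Int.cast_smul_eq_zsmul, Int.cast_smul_eq_zsmul]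
      rfl

lemma im_inner_map_ofAdd (hη : ∀ g h, η (g * h) = η g + η h) (p q : ℤ × ℤ) :
    (⟪η (.ofAdd p), η (.ofAdd q)⟫_ℂ).im =
      (p.1 * q.2 - p.2 * q.1) * (⟪η (.ofAdd (1, 0)), η (.ofAdd (0, 1))⟫_ℂ).im := by
  set x := η (.ofAdd (1, 0))
  set y := η (.ofAdd (0, 1))
  have hx : (⟪x, x⟫_ℂ).im = 0 := inner_self_im (𝕜 := ℂ) x
  have hy : (⟪y, y⟫_ℂ).im = 0 := inner_self_im (𝕜 := ℂ) y
  have hyx : (⟪y, x⟫_ℂ).im = -(⟪x, y⟫_ℂ).im := inner_im_symm (𝕜 := ℂ) y x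
  rw [map_ofAdd_eq_intCast_smul_add hη p, map_ofAdd_eq_intCast_smul_add hη q]
  simp only [inner_add_left, inner_add_right, inner_smul_left, inner_smul_right,
    map_intCast, Complex.add_im, Complex.mul_im, Complex.intCast_re, Complex.intCast_im]
  rw [hx, hy, hyx]
  ring

lemma forall_im_inner_eq_zero_iff (hη : ∀ g h, η (g * h) = η g + η h) :
    (∀ g h, (⟪η g, η h⟫_ℂ).im = 0) ↔
      (⟪η (.ofAdd (1, 0)), η (.ofAdd (0, 1))⟫_ℂ).im = 0 := by
  refine ⟨fun h_real ↦ h_real _ _, fun h_gen g h ↦ ?_⟩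
  rw [← ofAdd_toAdd g, ← ofAdd_toAdd h, im_inner_map_ofAdd hη, h_gen, mul_zero]

end IntProd

/-- A Gaussian cocycle `η` on `ℂ[ℤ²]` (with generators
`a = (1,0)`, `b = (0,1)` and trivial character) admits a generating functional
`ψ` (making `(ε·id, η, ψ)` a Schürmann triple) if and only if
`⟪η(a), η(b)⟫ ∈ ℝ`. -/
theorem levyKhinchin_stmt13
    {D : Type*} [NormedAddCommGroup D] [InnerProductSpace ℂ D]
    (η : Multiplicative (ℤ × ℤ) → D)
    (hη : ∀ g h : Multiplicative (ℤ × ℤ), η (g * h) = η g + η h)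
    (a b : Multiplicative (ℤ × ℤ))
    (ha : a = Multiplicative.ofAdd (1, 0)) (hb : b = Multiplicative.ofAdd (0, 1)) :
    (∃ ψ : Multiplicative (ℤ × ℤ) → ℂ,
      (∀ g, ψ g⁻¹ = starRingEnd ℂ (ψ g)) ∧
      (∀ g h, ψ (g * h) = ψ g + ψ h + ⟪η g⁻¹, η h⟫_ℂ)) ↔
    (⟪η a, η b⟫_ℂ).im = 0 := by
  subst ha hb
  exact (exists_isGeneratingFunctional_iff hη).trans (forall_im_inner_eq_zero_iff hη)
end

section
/- Let A be the unital *-algebra over ℂ with generators x, y and relations x* = x, x²y = −y, y*y = 0, with character ε determined by ε(x) = ε(y) = 0. Then for every unital *-representation π of A on a complex pre-Hilbert space D and every π-ε-cocycle η: A → D, one has π(y) = π(y*) = 0 and η(y) = η(y*) = 0. -/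
/-! Since `π (star y) = π y†`, `‖π y u‖² = ⟪u, π (star y * y) u⟫ = 0`. With `ε y = 0` the cocycle
identity turns `x² y = -y` into `π(x)² η(y) = -η(y)`, impossible for a nonzero vector and the
symmetric operator `π x`. Finally `star y = -(star y * x²)` and `π (star y) = 0 = ε (x²)` give
`η (star y) = 0`. -/

open scoped InnerProductSpace

theorem LinearMap.IsSymmetric.eq_zero_of_apply_apply_eq_neg {𝕜 E : Type*} [RCLike 𝕜]
    [NormedAddCommGroup E] [InnerProductSpace 𝕜 E] {T : E →ₗ[𝕜] E} (hT : T.IsSymmetric)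
    {v : E} (hv : T (T v) = -v) : v = 0 := by
  have h : -‖v‖ ^ 2 = ‖T v‖ ^ 2 := by
    have := congrArg RCLike.re (hT (T v) v)
    rwa [hv, inner_neg_left, map_neg, inner_self_eq_norm_sq, inner_self_eq_norm_sq] at this
  exact norm_eq_zero.mp (by nlinarith [sq_nonneg ‖v‖, sq_nonneg ‖T v‖])

section StarRepresentation

variable {𝕜 A D : Type*} [RCLike 𝕜] [Ring A] [Algebra 𝕜 A] [StarRing A]
  [NormedAddCommGroup D] [InnerProductSpace 𝕜 D] (π : A →ₐ[𝕜] (D →ₗ[𝕜] D))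
  (hπ : ∀ (a : A) (u v : D), ⟪π (star a) u, v⟫_𝕜 = ⟪u, π a v⟫_𝕜)
include hπ

theorem isSymmetric_of_star_eq {a : A} (ha : star a = a) : (π a).IsSymmetric := by
  intro u v
  simpa only [ha] using hπ a u v

theorem map_eq_zero_of_map_star_mul_self_eq_zero {a : A} (ha : π (star a * a) = 0) :
    π a = 0 := by
  ext u
  have h : ⟪π a u, π a u⟫_𝕜 = ⟪u, π (star a * a) u⟫_𝕜 := by
    simpa only [star_star, map_mul, Module.End.mul_apply] using hπ (star a) u (π a u)
  rw [ha, LinearMap.zero_apply, inner_zero_right] at h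
  exact inner_self_eq_zero.mp h

theorem map_star_eq_zero_of_map_eq_zero {a : A} (ha : π a = 0) : π (star a) = 0 :=
  map_eq_zero_of_map_star_mul_self_eq_zero π hπ (by rw [star_star, map_mul, ha, zero_mul])

end StarRepresentation

theorem levyKhinchin_stmt14_general
    {A : Type*} [Ring A] [Algebra ℂ A] [StarRing A]
    {D : Type*} [NormedAddCommGroup D] [InnerProductSpace ℂ D]
    (x y : A) (hx : star x = x) (hxy : x ^ 2 * y = -y) (hyy : star y * y = 0)
    (ε : A →⋆ₐ[ℂ] ℂ) (hεx : ε x = 0) (hεy : ε y = 0)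
    (π : A →ₐ[ℂ] (D →ₗ[ℂ] D))
    (hπ : ∀ (a : A) (u v : D), ⟪π (star a) u, v⟫_ℂ = ⟪u, π a v⟫_ℂ)
    (η : A →ₗ[ℂ] D)
    (hη : ∀ a b : A, η (a * b) = π a (η b) + ε b • η a) :
    π y = 0 ∧ π (star y) = 0 ∧ η y = 0 ∧ η (star y) = 0 := by
  have hπy : π y = 0 := map_eq_zero_of_map_star_mul_self_eq_zero π hπ (by rw [hyy, map_zero])
  have hπys : π (star y) = 0 := map_star_eq_zero_of_map_eq_zero π hπ hπy
  have hηy : η y = 0 := by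
    refine (isSymmetric_of_star_eq π hπ hx).eq_zero_of_apply_apply_eq_neg ?_
    have h := hη (x ^ 2) y
    rwa [hxy, map_neg, hεy, zero_smul, add_zero, pow_two, map_mul, eq_comm] at h
  have hηys : η (star y) = 0 := by
    have hyx : star y * x ^ 2 = -star y := by
      simpa only [star_mul, star_pow, hx, star_neg] using congrArg star hxy
    have h := hη (star y) (x ^ 2)
    rwa [hyx, map_neg, hπys, map_pow ε, hεx, LinearMap.zero_apply, zero_pow two_ne_zero,
      zero_smul, add_zero, neg_eq_zero] at h
  exact ⟨hπy, hπys, hηy, hηys⟩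

/-- Let `A` be the unital complex `*`-algebra with generators
`x, y` and relations `x* = x`, `x²y = -y`, `y*y = 0`, and `ε` the character with
`ε(x) = ε(y) = 0` (formalized for any `*`-algebra with distinguished elements
`x, y` satisfying these relations, which covers the universal one). Then for
every unital `*`-representation `π` on a pre-Hilbert space `D` and every
`π`-`ε`-cocycle `η` one has `π(y) = π(y*) = 0` and `η(y) = η(y*) = 0`. -/
theorem levyKhinchin_stmt14
    {A : Type*} [Ring A] [Algebra ℂ A] [StarRing A] [StarModule ℂ A]
    {D : Type*} [NormedAddCommGroup D] [InnerProductSpace ℂ D]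
    (x y : A) (hx : star x = x) (hxy : x ^ 2 * y = -y) (hyy : star y * y = 0)
    (ε : A →⋆ₐ[ℂ] ℂ) (hεx : ε x = 0) (hεy : ε y = 0)
    (π : A →ₐ[ℂ] (D →ₗ[ℂ] D))
    (hπ : ∀ (a : A) (u v : D), ⟪π (star a) u, v⟫_ℂ = ⟪u, π a v⟫_ℂ)
    (η : A →ₗ[ℂ] D)
    (hη : ∀ a b : A, η (a * b) = π a (η b) + ε b • η a) :
    π y = 0 ∧ π (star y) = 0 ∧ η y = 0 ∧ η (star y) = 0 :=
  levyKhinchin_stmt14_general x y hx hxy hyy ε hεx hεy π hπ η hη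
end

section
/- Let A be a unital complex *-algebra with character ε, (π, η, ψ) a Schürmann triple on (A, ε), and suppose η is Gaussian, i.e., an ε-ε-derivation. Then ψ vanishes on K₃ = span{abc : a, b, c ∈ ker(ε)}. -/
open scoped InnerProductSpace

theorem apply_mul_eq_zero_of_gaussian {R A M : Type*} [Zero R] [Mul A] [AddMonoid M]
    [SMulWithZero R M] {ε : A → R} {η : A → M}
    (hGauss : ∀ a b : A, η (a * b) = ε a • η b + ε b • η a)
    {b c : A} (hb : ε b = 0) (hc : ε c = 0) : η (b * c) = 0 := by
  rw [hGauss, hb, hc, zero_smul, zero_smul, add_zero]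

theorem apply_mul_eq_inner_of_mem_ker {𝕜 A D : Type*} [RCLike 𝕜] [Mul A] [Star A]
    [NormedAddCommGroup D] [InnerProductSpace 𝕜 D] {ε ψ : A → 𝕜} {η : A → D}
    (hψ : ∀ a b : A, ε a * ψ b - ψ (a * b) + ψ a * ε b = -⟪η (star a), η b⟫_𝕜)
    {a b : A} (ha : ε a = 0) (hb : ε b = 0) : ψ (a * b) = ⟪η (star a), η b⟫_𝕜 := by
  have h := hψ a b
  rw [ha, hb] at h
  linear_combination -h

theorem apply_mul_mul_eq_zero_of_gaussian {𝕜 A D F : Type*} [RCLike 𝕜] [Semigroup A] [Star A]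
    [NormedAddCommGroup D] [InnerProductSpace 𝕜 D] [FunLike F A 𝕜] [MulHomClass F A 𝕜]
    {ε : F} {η : A → D} {ψ : A → 𝕜}
    (hGauss : ∀ a b : A, η (a * b) = ε a • η b + ε b • η a)
    (hψ : ∀ a b : A, ε a * ψ b - ψ (a * b) + ψ a * ε b = -⟪η (star a), η b⟫_𝕜)
    {a b c : A} (ha : ε a = 0) (hb : ε b = 0) (hc : ε c = 0) : ψ (a * b * c) = 0 := by
  have hbc : ε (b * c) = 0 := by rw [map_mul, hb, zero_mul]
  rw [mul_assoc, apply_mul_eq_inner_of_mem_ker hψ ha hbc,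
    apply_mul_eq_zero_of_gaussian hGauss hb hc, inner_zero_right]

theorem levyKhinchin_stmt15_general
    {A : Type*} [Ring A] [Algebra ℂ A] [StarRing A]
    {D : Type*} [NormedAddCommGroup D] [InnerProductSpace ℂ D]
    (ε : A →⋆ₐ[ℂ] ℂ)
    (η : A →ₗ[ℂ] D)
    (hGauss : ∀ a b : A, η (a * b) = ε a • η b + ε b • η a)
    (ψ : A →ₗ[ℂ] ℂ)
    (hψ : ∀ a b : A, ε a * ψ b - ψ (a * b) + ψ a * ε b = -⟪η (star a), η b⟫_ℂ) :
    ∀ z ∈ Submodule.span ℂ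
        {w : A | ∃ a b c : A, ε a = 0 ∧ ε b = 0 ∧ ε c = 0 ∧ w = a * b * c},
      ψ z = 0 := by
  refine fun z hz => LinearMap.mem_ker.mp (Submodule.span_le.mpr ?_ hz)
  rintro _ ⟨a, b, c, ha, hb, hc, rfl⟩
  exact apply_mul_mul_eq_zero_of_gaussian hGauss hψ ha hb hc

/-- If `(π, η, ψ)` is a Schürmann triple on `(A, ε)` and `η`
is Gaussian (an `ε`-`ε`-derivation), then `ψ` vanishes on
`K₃ = span{abc : a, b, c ∈ ker ε}`. -/
theorem levyKhinchin_stmt15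
    {A : Type*} [Ring A] [Algebra ℂ A] [StarRing A] [StarModule ℂ A]
    {D : Type*} [NormedAddCommGroup D] [InnerProductSpace ℂ D]
    (ε : A →⋆ₐ[ℂ] ℂ) (π : A →ₐ[ℂ] (D →ₗ[ℂ] D))
    (hπ : ∀ (a : A) (u v : D), ⟪π (star a) u, v⟫_ℂ = ⟪u, π a v⟫_ℂ)
    (η : A →ₗ[ℂ] D)
    (hη : ∀ a b : A, η (a * b) = π a (η b) + ε b • η a)
    (hGauss : ∀ a b : A, η (a * b) = ε a • η b + ε b • η a)
    (ψ : A →ₗ[ℂ] ℂ)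
    (hherm : ∀ a : A, ψ (star a) = starRingEnd ℂ (ψ a))
    (hψ : ∀ a b : A, ε a * ψ b - ψ (a * b) + ψ a * ε b = -⟪η (star a), η b⟫_ℂ) :
    ∀ z ∈ Submodule.span ℂ
        {w : A | ∃ a b c : A, ε a = 0 ∧ ε b = 0 ∧ ε c = 0 ∧ w = a * b * c},
      ψ z = 0 :=
  levyKhinchin_stmt15_general ε η hGauss ψ hψ
end
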